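/- arXiv:1202.5703 — 3 statements merged into one kernel-verified Lean document; each statement's English description precedes it below -/
import Mathlib

section
/- Let M ∈ ℕ and r₁ ≤ r₂ ≤ … ≤ r_{M+1} be positive integers, and let ω_r = e^{2πi/r}. If z_{i}^{(j)} ∈ ℂ with |z_i^{(j)}| ≤ 1 for all 1 ≤ j ≤ M and 0 ≤ i ≤ r_j − 1, then |Σ_{i₁=0}^{r₁−1} ⋯ Σ_{i_M=0}^{r_M−1} z_{i₁}^{(1)} ⋯ z_{i_M}^{(M)} ω_{r₂}^{i₁ i₂} ω_{r₃}^{i₂ i₃} ⋯ ω_{r_M}^{i_{M−1} i_M}| ≤ (r₁ r₂ ⋯ r_{M+1})^{1/2}. -/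
/-!
Let `Q_M(k)` (`walshSum`) be the sum in the theorem with a last phase `ω_{r_{M+1}}^{i_M k}`
appended, so that the theorem bounds `|Q_M(0)|`. Summing out `i_{M+1}` first gives
`Q_{M+1}(k) = Σ_a z_a^{(M+1)} Q_M(a) ω_{r_{M+2}}^{a k}`, a discrete Fourier transform of length
`r_{M+2}` of a vector supported on `a < r_{M+1} ≤ r_{M+2}`. Parseval's identity and `|z| ≤ 1`
then give `Σ_k |Q_{M+1}(k)|² ≤ r_{M+2} Σ_a |Q_M(a)|²`, hence by induction
`|Q_M(0)|² ≤ Σ_k |Q_M(k)|² ≤ r₁ ⋯ r_{M+1}`.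
-/

open Complex Finset ComplexConjugate

noncomputable def unitRoot (n : ℕ) : ℂ := exp (2 * Real.pi * I / n)

theorem norm_unitRoot (n : ℕ) : ‖unitRoot n‖ = 1 := by
  rw [unitRoot, norm_exp]
  simp

theorem sum_unitRoot_pow_mul_conj {n a b : ℕ} (ha : a < n) (hb : b < n) :
    ∑ k ∈ range n, unitRoot n ^ (a * k) * conj (unitRoot n ^ (b * k)) =
      if a = b then (n : ℂ) else 0 := by
  have hω : IsPrimitiveRoot (unitRoot n) n := isPrimitiveRoot_exp n (by omega)
  have hω0 : unitRoot n ≠ 0 := exp_ne_zero _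
  set u := unitRoot n ^ a * (unitRoot n ^ b)⁻¹
  have hterm : ∀ k, unitRoot n ^ (a * k) * conj (unitRoot n ^ (b * k)) = u ^ k := by
    intro k
    rw [map_pow, ← inv_eq_conj (norm_unitRoot n), mul_pow, pow_mul, pow_mul, inv_pow]
  simp_rw [hterm]
  split_ifs with hab
  · simp [u, hab, hω0]
  · have hu : u ≠ 1 := fun h =>
      hab (hω.pow_inj ha hb (by simpa [u, mul_inv_eq_one₀, hω0] using h))
    have hun : u ^ n = 1 := by
      rw [mul_pow, inv_pow, ← pow_mul, ← pow_mul, mul_comm a, mul_comm b, pow_mul, pow_mul,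
        hω.pow_eq_one, one_pow, one_pow, inv_one, mul_one]
    rw [geom_sum_eq hu, hun, sub_self, zero_div]

theorem sum_sq_norm_sum_mul_unitRoot_pow {m n : ℕ} (hmn : m ≤ n) (f : ℕ → ℂ) :
    ∑ k ∈ range n, ‖∑ a ∈ range m, f a * unitRoot n ^ (a * k)‖ ^ 2 =
      n * ∑ a ∈ range m, ‖f a‖ ^ 2 := by
  apply ofReal_injective
  push_cast
  simp_rw [← mul_conj', map_sum, sum_mul_sum, map_mul]
  calc ∑ k ∈ range n, ∑ a ∈ range m, ∑ b ∈ range m,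
        f a * unitRoot n ^ (a * k) * (conj (f b) * conj (unitRoot n ^ (b * k)))
      = ∑ a ∈ range m, ∑ b ∈ range m, f a * conj (f b) *
          ∑ k ∈ range n, unitRoot n ^ (a * k) * conj (unitRoot n ^ (b * k)) := by
        rw [sum_comm]
        refine sum_congr rfl fun a _ => ?_
        rw [sum_comm]
        simp_rw [mul_sum]
        refine sum_congr rfl fun b _ => sum_congr rfl fun k _ => by ring
    _ = ∑ a ∈ range m, f a * conj (f a) * n := by
        refine sum_congr rfl fun a ha => ?_
        have ha' : a < n := (mem_range.mp ha).trans_le hmn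
        rw [sum_congr rfl fun b hb => by
          rw [sum_unitRoot_pow_mul_conj ha' ((mem_range.mp hb).trans_le hmn), mul_ite, mul_zero]]
        rw [sum_ite_eq, if_pos ha]
    _ = _ := by rw [mul_sum]; exact sum_congr rfl fun a _ => by ring

theorem Fin.sum_piFinset_snoc {α β : Type*} [AddCommMonoid β] {n : ℕ}
    (s : Fin (n + 1) → Finset α) (f : (Fin (n + 1) → α) → β) :
    ∑ x ∈ Fintype.piFinset s, f x =
      ∑ a ∈ s (Fin.last n), ∑ y ∈ Fintype.piFinset (Fin.init s), f (Fin.snoc y a) := by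
  rw [← sum_product']
  refine sum_nbij' (fun x => (x (Fin.last n), Fin.init x)) (fun p => Fin.snoc p.2 p.1)
    ?_ ?_ ?_ ?_ ?_
  · intro x hx
    exact mem_product.mpr (Fin.mem_piFinset_iff_last_init.mp hx)
  · intro p hp
    exact Fin.mem_piFinset_iff_last_init.mpr (by simpa using (mem_product.mp hp))
  · intro x _; simp
  · intro p _; simp
  · intro x _; simp

noncomputable def walshSum (r : ℕ → ℕ) (z : ℕ → ℕ → ℂ) (M k : ℕ) : ℂ :=
  ∑ i ∈ Fintype.piFinset (fun j : Fin M => range (r (j + 1))),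
    (∏ j : Fin M, z (j + 1) (i j)) *
      ∏ j : Fin M, unitRoot (r (j + 2)) ^ (i j * Fin.snoc (α := fun _ => ℕ) i k j.succ)

theorem walshSum_zero (r : ℕ → ℕ) (z : ℕ → ℕ → ℂ) (k : ℕ) :
    walshSum r z 0 k = 1 := by
  simp [walshSum]

theorem walshSum_succ (r : ℕ → ℕ) (z : ℕ → ℕ → ℂ) (M k : ℕ) :
    walshSum r z (M + 1) k =
      ∑ a ∈ range (r (M + 1)),
        z (M + 1) a * walshSum r z M a * unitRoot (r (M + 2)) ^ (a * k) := by
  rw [walshSum, Fin.sum_piFinset_snoc]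
  refine sum_congr rfl fun a _ => ?_
  rw [walshSum, mul_sum, sum_mul]
  refine sum_congr rfl fun i _ => ?_
  simp only [Fin.prod_univ_castSucc, Fin.val_castSucc, Fin.snoc_castSucc, Fin.val_last,
    Fin.snoc_last, Fin.succ_castSucc, Fin.succ_last]
  ring

theorem sum_sq_norm_walshSum_le (r : ℕ → ℕ) (z : ℕ → ℕ → ℂ) (M : ℕ)
    (hmono : ∀ j, 1 ≤ j → j ≤ M → r j ≤ r (j + 1))
    (hz : ∀ j i, 1 ≤ j → j ≤ M → i < r j → ‖z j i‖ ≤ 1) :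
    ∑ k ∈ range (r (M + 1)), ‖walshSum r z M k‖ ^ 2 ≤
      ∏ j ∈ range (M + 1), (r (j + 1) : ℝ) := by
  induction M with
  | zero => simp [walshSum_zero]
  | succ M ih =>
    have ih := ih (fun j h1 _ => hmono j h1 (by omega)) (fun j i h1 _ => hz j i h1 (by omega))
    have hzM : ∀ a ∈ range (r (M + 1)), ‖z (M + 1) a‖ ≤ 1 := fun a ha =>
      hz (M + 1) a (by omega) le_rfl (mem_range.mp ha)
    simp_rw [walshSum_succ]
    rw [sum_sq_norm_sum_mul_unitRoot_pow (hmono (M + 1) (by omega) le_rfl), prod_range_succ,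
      mul_comm _ (r (M + 1 + 1) : ℝ)]
    refine mul_le_mul_of_nonneg_left (le_trans ?_ ih) (by positivity)
    gcongr with a ha
    rw [norm_mul]
    exact mul_le_of_le_one_left (norm_nonneg _) (hzM a ha)

theorem walshSum_zero_right (r : ℕ → ℕ) (z : ℕ → ℕ → ℂ) (M : ℕ) :
    walshSum r z M 0 =
      ∑ i ∈ Fintype.piFinset (fun j : Fin M => range (r (j.1 + 1))),
        (∏ j : Fin M, z (j.1 + 1) (i j)) *
        ∏ j : Fin M, (if h : j.1 + 1 < M then
            exp (2 * Real.pi * I / r (j.1 + 2)) ^ (i j * i ⟨j.1 + 1, h⟩)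
          else 1) := by
  refine sum_congr rfl fun i _ => congrArg _ (prod_congr rfl fun j _ => ?_)
  split_ifs with h
  · rw [show j.succ = Fin.castSucc ⟨j.1 + 1, h⟩ from rfl, Fin.snoc_castSucc]
    rfl
  · rw [show j.succ = Fin.last M from Fin.ext (by rw [Fin.val_succ, Fin.val_last]; omega), Fin.snoc_last, mul_zero, pow_zero]

/-- Hille–Bohnenblust sup-norm estimate: for `|z_i^{(j)}| ≤ 1`,
`|Σ z_{i₁}^{(1)} ⋯ z_{i_M}^{(M)} ω_{r₂}^{i₁i₂} ⋯ ω_{r_M}^{i_{M-1}i_M}| ≤ (r₁ ⋯ r_{M+1})^{1/2}`.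
Here `r j` for `j = 1, …, M+1` are the sizes and `z j i` are the variables. -/
theorem walsh_Q_sup_bound (M : ℕ) (r : ℕ → ℕ)
    (hpos : ∀ j, 1 ≤ j → j ≤ M + 1 → 0 < r j)
    (hmono : ∀ j, 1 ≤ j → j ≤ M → r j ≤ r (j + 1))
    (z : ℕ → ℕ → ℂ)
    (hz : ∀ j i, 1 ≤ j → j ≤ M → i < r j → ‖z j i‖ ≤ 1) :
    ‖∑ i ∈ Fintype.piFinset (fun j : Fin M => Finset.range (r (j.1 + 1))),
        (∏ j : Fin M, z (j.1 + 1) (i j)) *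
        ∏ j : Fin M, (if h : j.1 + 1 < M then
            Complex.exp (2 * Real.pi * Complex.I / r (j.1 + 2)) ^ (i j * i ⟨j.1 + 1, h⟩)
          else 1)‖
      ≤ Real.sqrt (∏ j ∈ Finset.range (M + 1), (r (j + 1) : ℝ)) := by
  rw [← walshSum_zero_right]
  apply Real.le_sqrt_of_sq_le
  calc ‖walshSum r z M 0‖ ^ 2 ≤ ∑ k ∈ range (r (M + 1)), ‖walshSum r z M k‖ ^ 2 :=
        single_le_sum (f := fun k => ‖walshSum r z M k‖ ^ 2) (fun k _ => by positivity)
          (mem_range.mpr (hpos (M + 1) (by omega) le_rfl))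
    _ ≤ _ := sum_sq_norm_walshSum_le r z M hmono hz
end

section
/- Let (λ₁, …, λ_n) be real numbers that are linearly independent over ℚ. Then the image of the map t ↦ (e^{iλ₁t}, …, e^{iλₙt}) from ℝ to the torus 𝕋ⁿ is dense in 𝕋ⁿ. -/
/-!
For a subgroup `H` of the torus, `z ↦ infDist z H` is continuous and invariant under translation
by `H`, so each of its Fourier coefficients satisfies `c m = mFourier m a • c m` for `a ∈ H`. If no
nontrivial character `mFourier m` is identically `1` on `H`, every coefficient but `c 0` vanishes,
so the function is constant; it vanishes on `H`, hence everywhere, and `H` is dense. On the line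
`t ↦ (λᵢ t)ᵢ` the character `mFourier m` is `exp (2πi t ∑ mᵢ λᵢ)`, and independence of the `λᵢ`
makes `∑ mᵢ λᵢ ≠ 0`.
-/

open MeasureTheory Metric Complex Real

/- `mFourierCoeff` integrates against the Haar probability measure on `UnitAddCircle`, which
Mathlib installs only locally; translating that integral needs these instances back. -/
attribute [local instance] instMeasureSpaceUnitAddCircle instIsAddHaarMeasureUnitAddCircleVolume

theorem AddSubgroup.infDist_add_right {G : Type*} [SeminormedAddCommGroup G]
    (H : AddSubgroup G) {a : G} (ha : a ∈ H) (z : G) : infDist (z + a) H = infDist z H := by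
  have hHa : (· + a) '' (H : Set G) = H := by
    rw [Set.image_add_right]
    ext z
    exact H.add_mem_cancel_right (H.neg_mem ha)
  calc infDist (z + a) H = infDist (z + a) ((· + a) '' H) := by rw [hHa]
    _ = infDist z H := infDist_image (isometry_add_right a)

namespace UnitAddTorus

variable {d : Type*}

def lineHom (ν : d → ℝ) : ℝ →+ UnitAddTorus d where
  toFun t i := (ν i * t : ℝ)
  map_zero' := by ext; simp
  map_add' s t := by ext; simp [mul_add]

lemma lineHom_apply (ν : d → ℝ) (t : ℝ) : lineHom ν t = fun i => ((ν i * t : ℝ) : UnitAddCircle) :=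
  rfl

variable [Fintype d]

lemma mFourier_add_apply (m : d → ℤ) (x y : UnitAddTorus d) :
    mFourier m (x + y) = mFourier m x * mFourier m y := by
  simp only [mFourier, ContinuousMap.coe_mk, Pi.add_apply, ← Finset.prod_mul_distrib,
    fourier_apply, smul_add, AddCircle.toCircle_add, Circle.coe_mul]

lemma mFourier_neg_neg_apply (m : d → ℤ) (x : UnitAddTorus d) :
    mFourier (-m) (-x) = mFourier m x := by
  simp only [mFourier, ContinuousMap.coe_mk, Pi.neg_apply, fourier_apply, neg_smul, smul_neg,
    neg_neg]

lemma mFourier_coe_apply (m : d → ℤ) (x : d → ℝ) :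
    mFourier m (fun i => (x i : UnitAddCircle)) = exp (2 * π * I * ∑ i, m i * x i) := by
  simp only [mFourier, ContinuousMap.coe_mk, fourier_coe_apply, ← Complex.exp_sum]
  push_cast
  rw [Finset.mul_sum]
  simp only [div_one, mul_assoc]

variable {E : Type*} [NormedAddCommGroup E] [NormedSpace ℂ E]

lemma mFourierCoeff_comp_add_right (f : UnitAddTorus d → E) (a : UnitAddTorus d) (m : d → ℤ) :
    mFourierCoeff (fun z => f (z + a)) m = mFourier m a • mFourierCoeff f m := by
  unfold mFourierCoeff
  rw [← integral_smul, ← integral_add_right_eq_self _ (-a)]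
  congr 1 with z
  dsimp only
  rw [neg_add_cancel_right, smul_smul, mFourier_add_apply, mFourier_neg_neg_apply, mul_comm]

lemma mFourierCoeff_eq_zero_of_comp_add_eq {f : UnitAddTorus d → E} {a : UnitAddTorus d}
    {m : d → ℤ} (hf : (fun z => f (z + a)) = f) (ha : mFourier m a ≠ 1) :
    mFourierCoeff f m = 0 := by
  have h := mFourierCoeff_comp_add_right f a m
  rw [hf] at h
  have h' : (mFourier m a - 1) • mFourierCoeff f m = 0 := by rw [sub_smul, one_smul, ← h, sub_self]
  exact (smul_eq_zero.mp h').resolve_left (sub_ne_zero.mpr ha)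

lemma apply_eq_mFourierCoeff_zero {f : C(UnitAddTorus d, ℂ)}
    (hf : ∀ m ≠ 0, mFourierCoeff f m = 0) (x : UnitAddTorus d) :
    f x = mFourierCoeff f 0 := by
  have hsum := hasSum_mFourier_series_apply_of_summable
    (summable_of_ne_finset_zero (s := {0}) fun m hm => hf m (Finset.notMem_singleton.mp hm)) x
  refine hsum.unique ?_
  simpa [mFourier_zero] using hasSum_single (f := fun m => mFourierCoeff f m • mFourier m x) 0
    fun m hm => by simp [hf m hm]

theorem _root_.AddSubgroup.dense_of_forall_mFourier_ne_one (H : AddSubgroup (UnitAddTorus d))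
    (hH : ∀ m ≠ 0, ∃ a ∈ H, mFourier m a ≠ 1) : Dense (H : Set (UnitAddTorus d)) := by
  let g : C(UnitAddTorus d, ℂ) := ⟨fun z => (infDist z H : ℂ), by fun_prop⟩
  have hg_add : ∀ a ∈ H, (fun z => g (z + a)) = g := fun a ha => by
    ext z
    simp only [g, ContinuousMap.coe_mk, H.infDist_add_right ha]
  have hg_coeff : ∀ m ≠ 0, mFourierCoeff g m = 0 := fun m hm => by
    obtain ⟨a, ha, hma⟩ := hH m hm
    exact mFourierCoeff_eq_zero_of_comp_add_eq (hg_add a ha) hma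
  have hg_const : ∀ z, g z = g 0 := fun z =>
    (apply_eq_mFourierCoeff_zero hg_coeff z).trans (apply_eq_mFourierCoeff_zero hg_coeff 0).symm
  intro z
  rw [mem_closure_iff_infDist_zero ⟨0, H.zero_mem⟩]
  simpa [g, infDist_zero_of_mem H.zero_mem] using hg_const z

theorem denseRange_lineHom {ν : d → ℝ} (hν : LinearIndependent ℤ ν) : DenseRange (lineHom ν) := by
  refine (lineHom ν).range.dense_of_forall_mFourier_ne_one fun m hm => ?_
  set L := ∑ i, m i * ν i
  have hL : L ≠ 0 := fun hL => hm <| funext <|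
    Fintype.linearIndependent_iff.mp hν m (by simpa [zsmul_eq_mul] using hL)
  refine ⟨lineHom ν (1 / (2 * L)), ⟨_, rfl⟩, ?_⟩
  have : ∑ i, (m i : ℝ) * (ν i * (1 / (2 * L))) = 1 / 2 := by
    simp_rw [← mul_assoc, ← Finset.sum_mul]
    exact (by field_simp : L * (1 / (2 * L)) = 1 / 2)
  rw [lineHom_apply, mFourier_coe_apply, this]
  rw [show 2 * π * I * ((1 / 2 : ℝ) : ℂ) = π * I by push_cast; ring, exp_pi_mul_I]
  norm_num

end UnitAddTorus

/-- Kronecker's theorem: if `λ₁, …, λₙ` are real numbers linearly independent over `ℚ`, then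
the map `t ↦ (e^{iλ₁t}, …, e^{iλₙt})` from `ℝ` to the torus `𝕋ⁿ` has dense range. -/
theorem kronecker_dense_range (n : ℕ) (lam : Fin n → ℝ)
    (hlam : LinearIndependent ℚ lam) :
    DenseRange (fun t : ℝ => fun i : Fin n => Circle.exp (lam i * t)) := by
  let e := Homeomorph.piCongrRight fun _ : Fin n => AddCircle.homeomorphCircle one_ne_zero
  have he : (fun t : ℝ => fun i : Fin n => Circle.exp (lam i * t))
      = e ∘ UnitAddTorus.lineHom lam ∘ (· / (2 * π)) := by
    ext t i : 2
    simp only [Function.comp_apply, e, Homeomorph.piCongrRight_apply, UnitAddTorus.lineHom_apply,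
      AddCircle.homeomorphCircle_apply, AddCircle.toCircle_apply_mk, div_one]
    congr 1
    field_simp
  have hscale : Function.Surjective (· / (2 * π)) := fun t => ⟨t * (2 * π), by field_simp⟩
  rw [he]
  refine e.surjective.denseRange.comp ?_ e.continuous
  rw [DenseRange, hscale.range_comp]
  exact UnitAddTorus.denseRange_lineHom (hlam.restrict_scalars' ℤ)
end

section
/- Let M ≥ 2, r₁ ≤ … ≤ r_M positive integers, ω_r = e^{2πi/r}. Let S ⊆ {0,…,r₁−1} × ⋯ × {0,…,r_M−1} be a set with the property that for every fixed (i₁,…,i_{M−1}), the set {i_M : (i₁,…,i_M) ∈ S} is an interval of integers (possibly empty). Then |Σ_{(i₁,…,i_M) ∈ S} ω_{r₂}^{i₁i₂} ⋯ ω_{r_M}^{i_{M−1}i_M}| ≤ C_M r₁ ⋯ r_{M−2} r_M (log(r_{M−1}+1) + 1) for a constant C_M depending only on M. -/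
/-!
Group the terms by the prefix `p = (i₁, …, i_{M-1})`. Every factor but the last has modulus one
and depends only on `p`, so each group is, up to a unimodular factor, a geometric sum of
`ω_N ^ (k m)` (`N = r_M`, `k = i_{M-1}`) over an interval of `m`. For `k ≠ 0` it is at most
`2 / |1 - ω_N ^ k| ≤ N / (2k) + N / (2(N - k))`, by the chord bound `sin (π x) ≥ 2 x (1 - x)`; for
`k = 0` it is at most `N`; both cases are dominated by `N / (k + 1) + N / (N - k)`. At most
`r₁ ⋯ r_{M-2}` prefixes share a given `k < r_{M-1} ≤ N`, and summing that bound over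
`k < r_{M-1}` gives twice `N` times the harmonic number `H_{r_{M-1}} ≤ log (r_{M-1} + 1) + 1`.
-/

open Complex Finset

noncomputable def ω (N : ℕ) : ℂ := exp (2 * Real.pi * I / N)

lemma norm_ω (N : ℕ) : ‖ω N‖ = 1 := by
  simp [ω, Complex.norm_exp, Complex.div_re]

lemma two_mul_mul_one_sub_le_sin_pi_mul {x : ℝ} (h0 : 0 ≤ x) (h1 : x ≤ 1) :
    2 * x * (1 - x) ≤ Real.sin (Real.pi * x) := by
  rcases le_total x (1 / 2) with hx | hx
  · have := Real.mul_le_sin (x := Real.pi * x) (by positivity) (by nlinarith [Real.pi_pos])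
    rw [show 2 / Real.pi * (Real.pi * x) = 2 * x by field_simp] at this
    nlinarith
  · have := Real.mul_le_sin (x := Real.pi * (1 - x)) (by nlinarith [Real.pi_pos])
      (by nlinarith [Real.pi_pos])
    rw [show 2 / Real.pi * (Real.pi * (1 - x)) = 2 * (1 - x) by field_simp,
      show Real.pi * (1 - x) = Real.pi - Real.pi * x by ring, Real.sin_pi_sub] at this
    nlinarith

lemma norm_one_sub_ω_pow_ge {N k : ℕ} (hkN : k ≤ N) :
    4 * k * (N - k) / N ^ 2 ≤ ‖1 - ω N ^ k‖ := by
  rcases Nat.eq_zero_or_pos N with rfl | hN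
  · simp
  have hN' : (0 : ℝ) < N := by exact_mod_cast hN
  have hx0 : (0 : ℝ) ≤ k / N := by positivity
  have hx1 : (k : ℝ) / N ≤ 1 := (div_le_one hN').2 (by exact_mod_cast hkN)
  have hpow : ω N ^ k = exp (I * ↑(2 * Real.pi * (k / N))) := by
    rw [ω, ← exp_nat_mul]; push_cast; ring_nf
  rw [norm_sub_rev, hpow, norm_exp_I_mul_ofReal_sub_one, norm_mul, Real.norm_two,
    show 2 * Real.pi * (k / N) / 2 = Real.pi * (k / N) by ring]
  calc (4 * k * (N - k) / N ^ 2 : ℝ) = 2 * (2 * (k / N) * (1 - k / N)) := by field_simp; ring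
    _ ≤ 2 * Real.sin (Real.pi * (k / N)) := by
      gcongr; exact two_mul_mul_one_sub_le_sin_pi_mul hx0 hx1
    _ ≤ 2 * ‖Real.sin (Real.pi * (k / N))‖ := by gcongr; exact Real.le_norm_self _

lemma norm_geom_sum_Ico_le {K : Type*} [NormedDivisionRing K] {z : K} (hz : ‖z‖ = 1)
    (hz1 : z ≠ 1) (a b : ℕ) : ‖∑ m ∈ Ico a b, z ^ m‖ ≤ 2 / ‖1 - z‖ := by
  rcases le_or_gt a b with hab | hab
  · rw [geom_sum_Ico hz1 hab, norm_div, norm_sub_rev z]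
    gcongr
    calc ‖z ^ b - z ^ a‖ ≤ ‖z ^ b‖ + ‖z ^ a‖ := norm_sub_le _ _
      _ = 2 := by simp [hz]; norm_num
  · rw [Ico_eq_empty_of_le hab.le, sum_empty, norm_zero]
    positivity

lemma exists_eq_Ico_of_ordConnected {T : Finset ℕ} (hT : (T : Set ℕ).OrdConnected) :
    ∃ a b, T = Ico a b := by
  rcases T.eq_empty_or_nonempty with rfl | hne
  · exact ⟨0, 0, rfl⟩
  refine ⟨T.min' hne, T.max' hne + 1, ?_⟩
  ext m
  rw [Ico_add_one_right_eq_Icc, mem_Icc]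
  refine ⟨fun hm => ⟨min'_le _ _ hm, le_max' _ _ hm⟩, fun hm => ?_⟩
  exact_mod_cast hT.out (T.min'_mem hne) (T.max'_mem hne) hm

lemma norm_sum_ω_pow_mul_le {N k : ℕ} (hk : k < N) {T : Finset ℕ} (hTN : T ⊆ range N)
    (hT : (T : Set ℕ).OrdConnected) :
    ‖∑ m ∈ T, ω N ^ (k * m)‖ ≤ N / (k + 1) + N / (N - k) := by
  have hNk : (0 : ℝ) < N - k := by rw [sub_pos]; exact_mod_cast hk
  rcases Nat.eq_zero_or_pos k with rfl | hk0
  · calc ‖∑ m ∈ T, ω N ^ (0 * m)‖ = T.card := by simp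
      _ ≤ N := by exact_mod_cast (card_le_card hTN).trans (card_range N).le
      _ ≤ N / ((0 : ℕ) + 1) + N / (N - (0 : ℕ)) := by
        simp only [Nat.cast_zero, zero_add, div_one, sub_zero]
        exact le_add_of_nonneg_right (by positivity)
  obtain ⟨a, b, rfl⟩ := exists_eq_Ico_of_ordConnected hT
  have hchord := norm_one_sub_ω_pow_ge hk.le
  have hchord_pos : (0 : ℝ) < 4 * k * (N - k) / N ^ 2 := by
    have : (0 : ℝ) < k := by exact_mod_cast hk0
    have : (0 : ℝ) < N := by exact_mod_cast hk0.trans hk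
    positivity
  have hz1 : ω N ^ k ≠ 1 := fun h => by rw [h, sub_self, norm_zero] at hchord; linarith
  have hk1 : (k : ℝ) + 1 ≤ 2 * k := by
    have : (1 : ℝ) ≤ k := by exact_mod_cast hk0
    linarith
  simp_rw [pow_mul]
  calc ‖∑ m ∈ Ico a b, (ω N ^ k) ^ m‖ ≤ 2 / ‖1 - ω N ^ k‖ :=
        norm_geom_sum_Ico_le (by rw [norm_pow, norm_ω, one_pow]) hz1 a b
    _ ≤ 2 / (4 * k * (N - k) / N ^ 2) := by gcongr
    _ = N / (2 * k) + N / (2 * (N - k)) := by field_simp; ring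
    _ ≤ N / (k + 1) + N / (N - k) := by gcongr; linarith

lemma sum_range_one_div_sub_eq_harmonic (L : ℕ) :
    ∑ k ∈ range L, (1 : ℝ) / (L - k) = harmonic L := by
  rw [← sum_range_reflect, harmonic, Rat.cast_sum]
  refine sum_congr rfl fun j hj => ?_
  rw [mem_range] at hj
  rw [Nat.cast_sub (by omega), Nat.cast_sub (by omega)]
  push_cast
  ring

lemma sum_range_div_add_div_sub_le {N L : ℕ} (hLN : L ≤ N) :
    ∑ k ∈ range L, ((N : ℝ) / (k + 1) + N / (N - k)) ≤ 2 * N * (Real.log (L + 1) + 1) := by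
  have hfirst : ∑ k ∈ range L, (N : ℝ) / (k + 1) = N * harmonic L := by
    simp [harmonic, mul_sum, div_eq_mul_inv]
  have hsecond : ∑ k ∈ range L, (N : ℝ) / (N - k) ≤ N * harmonic L := by
    rw [← sum_range_one_div_sub_eq_harmonic, mul_sum]
    refine sum_le_sum fun k hk => ?_
    have hkL : (k : ℝ) < L := by exact_mod_cast mem_range.1 hk
    have hLN' : (L : ℝ) ≤ N := by exact_mod_cast hLN
    rw [mul_one_div]
    gcongr
  have hharmonic : (harmonic L : ℝ) ≤ Real.log (L + 1) + 1 := by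
    have hlog : Real.log L ≤ Real.log (L + 1) := by
      rcases Nat.eq_zero_or_pos L with rfl | hL
      · simp
      · exact Real.log_le_log (by positivity) (by linarith)
    have : (harmonic L : ℝ) ≤ 1 + Real.log L := by exact_mod_cast harmonic_le_one_add_log L
    linarith
  rw [sum_add_distrib, hfirst]
  have hN : (0 : ℝ) ≤ N := by positivity
  nlinarith

lemma prod_Icc_one_eq_prod_fin {R : Type*} [CommMonoid R] (f : ℕ → R) (n : ℕ) :
    ∏ j ∈ Icc 1 n, f j = ∏ j : Fin n, f (j + 1) := by
  rw [Fin.prod_univ_eq_prod_range (fun j => f (j + 1)), range_eq_Ico, prod_Ico_add', zero_add,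
    Ico_add_one_right_eq_Icc]

section Fibers

variable {α : Type*} {n : ℕ}

lemma image_init_subset_piFinset {S : Finset (Fin (n + 1) → α)} {t : Fin (n + 1) → Finset α}
    [DecidableEq (Fin n → α)] (hS : S ⊆ Fintype.piFinset t) :
    S.image Fin.init ⊆ Fintype.piFinset fun j => t j.castSucc := by
  intro p hp
  obtain ⟨i, hi, rfl⟩ := mem_image.1 hp
  exact Fintype.mem_piFinset.2 fun j => Fintype.mem_piFinset.1 (hS hi) j.castSucc

lemma sum_le_prod_card_mul_sum {U : Finset (Fin (n + 1) → α)} {t : Fin (n + 1) → Finset α}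
    (hU : U ⊆ Fintype.piFinset t) {f : α → ℝ} (hf : ∀ k ∈ t (Fin.last n), 0 ≤ f k) :
    ∑ p ∈ U, f (p (Fin.last n)) ≤
      (∏ j : Fin n, ((t j.castSucc).card : ℝ)) * ∑ k ∈ t (Fin.last n), f k := by
  have hprod : ∏ j, ∑ k ∈ t j, (if j = Fin.last n then f k else 1) =
      (∏ j : Fin n, ((t j.castSucc).card : ℝ)) * ∑ k ∈ t (Fin.last n), f k := by
    simp [Fin.prod_univ_castSucc, Fin.castSucc_ne_last]
  rw [← hprod, prod_univ_sum]
  simp only [prod_ite_eq', mem_univ, if_true]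
  exact sum_le_sum_of_subset_of_nonneg hU fun p hp _ =>
    hf _ (Fintype.mem_piFinset.1 hp (Fin.last n))

variable [DecidableEq α]

def lastFiber (S : Finset (Fin (n + 1) → α)) (p : Fin n → α) : Finset α :=
  {i ∈ S | Fin.init i = p}.image (· (Fin.last n))

lemma mem_lastFiber {S : Finset (Fin (n + 1) → α)} {p : Fin n → α} {m : α} :
    m ∈ lastFiber S p ↔ Fin.snoc p m ∈ S := by
  simp only [lastFiber, mem_image, mem_filter]
  constructor
  · rintro ⟨i, ⟨hi, rfl⟩, rfl⟩
    rwa [Fin.snoc_init_self]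
  · exact fun h => ⟨_, ⟨h, Fin.init_snoc _ _⟩, Fin.snoc_last _ _⟩

lemma sum_eq_sum_init_sum_lastFiber {β : Type*} [AddCommMonoid β]
    (S : Finset (Fin (n + 1) → α)) (f : (Fin (n + 1) → α) → β) :
    ∑ i ∈ S, f i = ∑ p ∈ S.image Fin.init, ∑ m ∈ lastFiber S p, f (Fin.snoc p m) := by
  rw [← sum_fiberwise_of_maps_to fun i hi => mem_image_of_mem Fin.init hi]
  refine sum_congr rfl fun p _ => ?_
  have hsnoc : ∀ i ∈ {i ∈ S | Fin.init i = p}, Fin.snoc p (i (Fin.last n)) = i := by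
    intro i hi
    rw [← (mem_filter.1 hi).2, Fin.snoc_init_self]
  rw [lastFiber, sum_image fun i hi j hj hij => by
    rw [← hsnoc i hi, ← hsnoc j hj, show i (Fin.last n) = j (Fin.last n) from hij]]
  exact sum_congr rfl fun i hi => by rw [hsnoc i hi]

lemma ordConnected_lastFiber [Preorder α] {S : Finset (Fin (n + 1) → α)}
    (hS : ∀ f ∈ S, ∀ g ∈ S, Fin.init f = Fin.init g → ∀ m, f (Fin.last n) ≤ m →
      m ≤ g (Fin.last n) → Function.update f (Fin.last n) m ∈ S) (p : Fin n → α) :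
    (lastFiber S p : Set α).OrdConnected := by
  refine ⟨fun a ha b hb m hm => ?_⟩
  rw [mem_coe, mem_lastFiber] at ha hb ⊢
  have h := hS _ ha _ hb (by rw [Fin.init_snoc, Fin.init_snoc]) m
    (by rw [Fin.snoc_last]; exact hm.1) (by rw [Fin.snoc_last]; exact hm.2)
  rwa [Fin.update_snoc_last] at h

end Fibers

noncomputable def chainPhase (r : ℕ → ℕ) {n : ℕ} (i : Fin (n + 1) → ℕ) : ℂ :=
  ∏ j : Fin n, ω (r (j + 2)) ^ (i j.castSucc * i j.succ)

lemma norm_chainPhase (r : ℕ → ℕ) {n : ℕ} (i : Fin (n + 1) → ℕ) : ‖chainPhase r i‖ = 1 := by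
  simp [chainPhase, norm_ω]

lemma chainPhase_snoc (r : ℕ → ℕ) {n : ℕ} (p : Fin (n + 1) → ℕ) (m : ℕ) :
    chainPhase r (Fin.snoc p m : Fin (n + 2) → ℕ) =
      chainPhase r p * ω (r (n + 2)) ^ (p (Fin.last n) * m) := by
  simp only [chainPhase, Fin.prod_univ_castSucc (n := n), Fin.succ_castSucc, Fin.snoc_castSucc,
    Fin.succ_last, Fin.snoc_last, Fin.val_castSucc, Fin.val_last]

lemma prod_dite_eq_chainPhase (r : ℕ → ℕ) {n : ℕ} (i : Fin (n + 2) → ℕ) :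
    (∏ j : Fin (n + 2), if h : j.1 + 1 < n + 2 then
      exp (2 * Real.pi * I / r (j.1 + 2)) ^ (i j * i ⟨j.1 + 1, h⟩) else 1) = chainPhase r i := by
  rw [Fin.prod_univ_castSucc, dif_neg (by simp), mul_one]
  exact prod_congr rfl fun j _ => dif_pos (by simp; omega)

lemma norm_sum_lastFiber_chainPhase_le (r : ℕ → ℕ) {n : ℕ} {S : Finset (Fin (n + 2) → ℕ)}
    (hSr : S ⊆ Fintype.piFinset fun j => range (r (j + 1)))
    (hS : ∀ f ∈ S, ∀ g ∈ S, Fin.init f = Fin.init g → ∀ m, f (Fin.last (n + 1)) ≤ m →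
      m ≤ g (Fin.last (n + 1)) → Function.update f (Fin.last (n + 1)) m ∈ S)
    {p : Fin (n + 1) → ℕ} (hp : p (Fin.last n) < r (n + 2)) :
    ‖∑ m ∈ lastFiber S p, chainPhase r (Fin.snoc p m)‖ ≤
      r (n + 2) / (p (Fin.last n) + 1) + r (n + 2) / (r (n + 2) - p (Fin.last n)) := by
  have hfiber : lastFiber S p ⊆ range (r (n + 2)) := fun m hm => by
    simpa using Fintype.mem_piFinset.1 (hSr (mem_lastFiber.1 hm)) (Fin.last (n + 1))
  simp_rw [chainPhase_snoc, ← mul_sum, norm_mul, norm_chainPhase, one_mul]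
  exact norm_sum_ω_pow_mul_le hp hfiber (ordConnected_lastFiber hS p)

/-- Key estimate: if `S` is a set of index tuples `(i₁, …, i_M)`, `i_j < r_j`, such that for
every fixed prefix `(i₁, …, i_{M-1})` the fibre in the last coordinate is an interval of
integers, then `|Σ_{i ∈ S} ω_{r₂}^{i₁i₂} ⋯ ω_{r_M}^{i_{M-1}i_M}|
≤ C_M r₁ ⋯ r_{M-2} r_M (log(r_{M-1}+1) + 1)` with `C_M` depending only on `M`. -/
theorem key_estimate_partial_sums (M : ℕ) (hM : 2 ≤ M) :
    ∃ C : ℝ, 0 < C ∧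
      ∀ r : ℕ → ℕ, (∀ j, 1 ≤ j → j ≤ M → 0 < r j) → (∀ j, 1 ≤ j → j ≤ M - 1 → r j ≤ r (j + 1)) →
      ∀ S : Finset (Fin M → ℕ),
        (S ⊆ Fintype.piFinset fun j : Fin M => Finset.range (r (j.1 + 1))) →
        (∀ f ∈ S, ∀ g ∈ S, (∀ j : Fin M, j.1 + 1 < M → f j = g j) →
          ∀ m : ℕ, f ⟨M - 1, by omega⟩ ≤ m → m ≤ g ⟨M - 1, by omega⟩ →
            Function.update f ⟨M - 1, by omega⟩ m ∈ S) →
        ‖∑ i ∈ S, ∏ j : Fin M, (if h : j.1 + 1 < M then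
              Complex.exp (2 * Real.pi * Complex.I / r (j.1 + 2)) ^ (i j * i ⟨j.1 + 1, h⟩)
            else 1)‖
          ≤ C * (∏ j ∈ Finset.Icc 1 (M - 2), (r j : ℝ)) * (r M : ℝ) *
              (Real.log ((r (M - 1) : ℝ) + 1) + 1) := by
  obtain ⟨n, rfl⟩ : ∃ n, M = n + 2 := ⟨M - 2, by omega⟩
  refine ⟨2, two_pos, fun r _ hmono S hSr hSint => ?_⟩
  set N := r (n + 2)
  have hLN : r (n + 1) ≤ N := hmono (n + 1) (by omega) (by omega)
  have hS : ∀ f ∈ S, ∀ g ∈ S, Fin.init f = Fin.init g → ∀ m, f (Fin.last (n + 1)) ≤ m →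
      m ≤ g (Fin.last (n + 1)) → Function.update f (Fin.last (n + 1)) m ∈ S :=
    fun f hf g hg hfg => hSint f hf g hg fun j hj => congrFun hfg ⟨j, by omega⟩
  have hinit := image_init_subset_piFinset hSr
  set B : ℕ → ℝ := fun k => N / (k + 1) + N / (N - k)
  simp_rw [prod_dite_eq_chainPhase]
  rw [sum_eq_sum_init_sum_lastFiber]
  calc _ ≤ ∑ p ∈ S.image Fin.init, ‖∑ m ∈ lastFiber S p, chainPhase r (Fin.snoc p m)‖ :=
        norm_sum_le _ _
    _ ≤ ∑ p ∈ S.image Fin.init, B (p (Fin.last n)) := sum_le_sum fun p hp =>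
        norm_sum_lastFiber_chainPhase_le r hSr hS
          ((mem_range.1 (Fintype.mem_piFinset.1 (hinit hp) (Fin.last n))).trans_le hLN)
    _ ≤ (∏ j : Fin n, ((range (r (j + 1))).card : ℝ)) * ∑ k ∈ range (r (n + 1)), B k :=
        sum_le_prod_card_mul_sum hinit fun k hk => by
          have : (0 : ℝ) < N - k := sub_pos.2 (by exact_mod_cast (mem_range.1 hk).trans_le hLN)
          positivity
    _ ≤ 2 * (∏ j ∈ Icc 1 n, (r j : ℝ)) * N * (Real.log (r (n + 1) + 1) + 1) := by
        simp only [card_range, prod_Icc_one_eq_prod_fin]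
        have hprod : (0 : ℝ) ≤ ∏ j : Fin n, (r (j + 1) : ℝ) := by positivity
        nlinarith [mul_le_mul_of_nonneg_left (sum_range_div_add_div_sub_le hLN) hprod]
end
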